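/- arXiv:2202.08087 — 5 statements merged into one kernel-verified Lean document; each statement's English description precedes it below -/
import Mathlib

section
/- Let d ≥ K ≥ 2, n ≥ 1, λ_W > 0, λ_H > 0, and set c := K√(nλ_H λ_W). Consider f(W,H) := (1/(2Kn))‖WH − Y‖_F² + (λ_W/2)‖W‖_F² + (λ_H/2)‖H‖_F² over W ∈ ℝ^{K×d} and H ∈ ℝ^{d×Kn}. If c ≤ 1, then any global minimizer (W*, H*) of f satisfies: (i) h*_{k,1} = … = h*_{k,n} =: h*_k for every class k ∈ [K]; (ii) ‖h*_1‖₂² = … = ‖h*_K‖₂² = ρ := (1−c)√(λ_W/(nλ_H)); (iii) the Gram matrix [h*_1,…,h*_K]ᵀ[h*_1,…,h*_K] equals ρ·I_K; (iv) w*_k = √(nλ_H/λ_W)·h*_k for every k ∈ [K]. If c > 1, then f attains its global minimum at (W*, H*) = (0, 0). -/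
open Matrix Finset

noncomputable section

def frobSq {m n : Type*} [Fintype m] [Fintype n] (A : Matrix m n ℝ) : ℝ :=
  ∑ i, ∑ j, (A i j) ^ 2

/-!
With `β = √(nλ_H/λ_W)`, so that `λ_H/β = c/(Kn)`, and `Y Yᵀ = n • 1`, completing squares gives,
for every `(W, H)`,
  `f(W, H) = c - c²/2 + ‖WH - (1-c)Y‖²/(2Kn) + (λ_H/2)‖H - β⁻¹WᵀY‖²`.
If `c ≤ 1`, both squares vanish at `W = √(β(1-c)) E`, `H = β⁻¹WᵀY` for any `E` with orthonormal
rows (these exist as `d ≥ K`), so every minimizer has `WH = (1-c)Y` and `H = β⁻¹WᵀY`, i.e.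
`h_{k,i} = β⁻¹ w_k`; multiplying the first equation by `Yᵀ` gives the Gram matrix
`WWᵀ = β(1-c) • 1`. If `c ≥ 1`, the same identity for `±β` bounds the regularizer below by
`(c/(Kn))|⟨WH, Y⟩|`, whence `f ≥ 1/2 = f(0, 0)`.
-/

theorem sqrt_mul_mul_sqrt_div {x y : ℝ} (hx : 0 ≤ x) (hy : 0 < y) :
    √(x * y) * √(x / y) = x := by
  rw [← Real.sqrt_mul (by positivity), show x * y * (x / y) = x ^ 2 by field_simp,
    Real.sqrt_sq hx]

section Frobenius

variable {m p : Type*} [Fintype m] [Fintype p]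

theorem frobSq_eq_trace (A : Matrix m p ℝ) : frobSq A = trace (Aᵀ * A) := by
  simp only [frobSq, Matrix.trace, Matrix.diag, mul_apply, transpose_apply, sq]
  exact sum_comm

theorem frobSq_transpose (A : Matrix m p ℝ) : frobSq Aᵀ = frobSq A := sum_comm

theorem frobSq_eq_trace_mul_transpose (A : Matrix m p ℝ) : frobSq A = trace (A * Aᵀ) := by
  rw [← frobSq_transpose, frobSq_eq_trace, transpose_transpose]

@[simp]
theorem frobSq_zero : frobSq (0 : Matrix m p ℝ) = 0 := by
  simp [frobSq]

theorem frobSq_neg (A : Matrix m p ℝ) : frobSq (-A) = frobSq A := by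
  simp [frobSq]

theorem frobSq_nonneg (A : Matrix m p ℝ) : 0 ≤ frobSq A := by
  unfold frobSq; positivity

theorem frobSq_eq_zero_iff {A : Matrix m p ℝ} : frobSq A = 0 ↔ A = 0 := by
  simp [frobSq, sum_eq_zero_iff_of_nonneg, sum_nonneg, sq_nonneg, ← Matrix.ext_iff]

theorem frobSq_sub_smul (A B : Matrix m p ℝ) (t : ℝ) :
    frobSq (A - t • B) = frobSq A - 2 * t * trace (Aᵀ * B) + t ^ 2 * frobSq B := by
  simp only [frobSq_eq_trace, transpose_sub, transpose_smul, Matrix.sub_mul, Matrix.mul_sub,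
    Matrix.smul_mul, Matrix.mul_smul, trace_sub, trace_smul, smul_eq_mul]
  rw [← trace_transpose (Bᵀ * A), transpose_mul, transpose_transpose]
  ring

theorem submatrix_one_mul_transpose {l : Type*} [DecidableEq l] [DecidableEq m] {e : l → m}
    (he : Function.Injective e) :
    (1 : Matrix m m ℝ).submatrix e id * ((1 : Matrix m m ℝ).submatrix e id)ᵀ = 1 := by
  rw [transpose_submatrix, transpose_one, ← submatrix_mul _ _ _ _ _ Function.bijective_id,
    Matrix.mul_one, submatrix_one e he]

end Frobenius

section OneHot

variable (κ ι : Type*) [Fintype κ] [DecidableEq κ]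

def oneHotLabels : Matrix κ (κ × ι) ℝ := of fun k p => if p.1 = k then 1 else 0

variable {κ ι}

@[simp]
theorem mul_oneHotLabels_apply {m : Type*} (A : Matrix m κ ℝ) (i : m) (p : κ × ι) :
    (A * oneHotLabels κ ι) i p = A i p.1 := by
  simp [oneHotLabels, mul_apply]

theorem oneHotLabels_mul_transpose [Fintype ι] :
    oneHotLabels κ ι * (oneHotLabels κ ι)ᵀ = (Fintype.card ι : ℝ) • 1 := by
  ext k k'
  by_cases h : k = k' <;>
    simp [mul_apply, oneHotLabels, one_apply, Fintype.sum_prod_type, h, eq_comm]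

theorem frobSq_oneHotLabels [Fintype ι] :
    frobSq (oneHotLabels κ ι) = Fintype.card κ * Fintype.card ι := by
  rw [frobSq_eq_trace, trace_mul_comm, oneHotLabels_mul_transpose]
  simp [mul_comm]

theorem regularizer_eq_frobSq_add_trace {δ : Type*} [Fintype ι] [Fintype δ] {lW lH β : ℝ}
    (hβ : β ≠ 0) (hβW : β ^ 2 * lW = Fintype.card ι * lH)
    (W : Matrix κ δ ℝ) (H : Matrix δ (κ × ι) ℝ) :
    lW / 2 * frobSq W + lH / 2 * frobSq H
      = lH / 2 * frobSq (H - β⁻¹ • (Wᵀ * oneHotLabels κ ι))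
        + lH / β * trace ((W * H)ᵀ * oneHotLabels κ ι) := by
  have hWY : frobSq (Wᵀ * oneHotLabels κ ι) = Fintype.card ι * frobSq W := by
    rw [frobSq_eq_trace, transpose_mul, transpose_transpose, Matrix.mul_assoc, trace_mul_comm,
      Matrix.mul_assoc, Matrix.mul_assoc, oneHotLabels_mul_transpose, Matrix.mul_smul,
      Matrix.mul_one, Matrix.mul_smul, trace_smul, ← frobSq_eq_trace_mul_transpose, smul_eq_mul]
  have hHWY : trace (Hᵀ * (Wᵀ * oneHotLabels κ ι)) = trace ((W * H)ᵀ * oneHotLabels κ ι) := by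
    rw [transpose_mul, Matrix.mul_assoc]
  rw [frobSq_sub_smul, hWY, hHWY]
  field_simp
  linear_combination (frobSq W) * hβW

theorem mul_transpose_eq_smul_one {δ : Type*} [Fintype ι] [Nonempty ι] [Fintype δ]
    {W : Matrix κ δ ℝ} {H : Matrix δ (κ × ι) ℝ} {β t : ℝ}
    (hβ : β ≠ 0) (hWH : W * H = t • oneHotLabels κ ι)
    (hH : H = β⁻¹ • (Wᵀ * oneHotLabels κ ι)) :
    W * Wᵀ = (β * t) • 1 := by
  have h := congrArg (· * (oneHotLabels κ ι)ᵀ) hWH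
  simp only [hH, Matrix.mul_smul, Matrix.smul_mul, ← Matrix.mul_assoc] at h
  rw [Matrix.mul_assoc (W * Wᵀ), oneHotLabels_mul_transpose, Matrix.mul_smul, Matrix.mul_one,
    smul_smul, smul_smul] at h
  have hι : (Fintype.card ι : ℝ) ≠ 0 := Nat.cast_ne_zero.2 Fintype.card_ne_zero
  calc W * Wᵀ = (β * (Fintype.card ι : ℝ)⁻¹) • ((β⁻¹ * Fintype.card ι) • (W * Wᵀ)) := by
        rw [smul_smul, mul_mul_mul_comm, mul_inv_cancel₀ hβ, inv_mul_cancel₀ hι, one_mul,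
          one_smul]
    _ = (β * t) • 1 := by
        rw [h, smul_smul]
        congr 1
        field_simp

end OneHot

section Objective

variable {K d n : ℕ}

def ufmObjective (lW lH : ℝ) (Y : Matrix (Fin K) (Fin K × Fin n) ℝ)
    (W : Matrix (Fin K) (Fin d) ℝ) (H : Matrix (Fin d) (Fin K × Fin n) ℝ) : ℝ :=
  1 / (2 * (K : ℝ) * (n : ℝ)) * frobSq (W * H - Y) + lW / 2 * frobSq W + lH / 2 * frobSq H

theorem ufmObjective_eq_add_frobSq (hK : K ≠ 0) (hn : n ≠ 0) {lW lH β c : ℝ} (hβ : β ≠ 0)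
    (hβW : β ^ 2 * lW = n * lH) (hcβ : c * β = K * n * lH)
    (W : Matrix (Fin K) (Fin d) ℝ) (H : Matrix (Fin d) (Fin K × Fin n) ℝ) :
    ufmObjective lW lH (oneHotLabels (Fin K) (Fin n)) W H
      = c - c ^ 2 / 2
        + 1 / (2 * K * n) * frobSq (W * H - (1 - c) • oneHotLabels (Fin K) (Fin n))
        + lH / 2 * frobSq (H - β⁻¹ • (Wᵀ * oneHotLabels (Fin K) (Fin n))) := by
  have hloss := frobSq_sub_smul (W * H) (oneHotLabels (Fin K) (Fin n)) 1
  rw [one_smul] at hloss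
  rw [ufmObjective, add_assoc, regularizer_eq_frobSq_add_trace hβ (by simpa using hβW), hloss,
    frobSq_sub_smul (W * H), frobSq_oneHotLabels]
  simp only [Fintype.card_fin]
  field_simp
  linear_combination (-2 * trace ((W * H)ᵀ * oneHotLabels (Fin K) (Fin n))) * hcβ

theorem ufmObjective_zero_zero (hK : K ≠ 0) (hn : n ≠ 0) (lW lH : ℝ) :
    ufmObjective lW lH (oneHotLabels (Fin K) (Fin n)) (0 : Matrix (Fin K) (Fin d) ℝ) 0
      = 1 / 2 := by
  simp [ufmObjective, frobSq_neg, frobSq_oneHotLabels]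
  field_simp

theorem one_half_le_ufmObjective (hK : K ≠ 0) (hn : n ≠ 0) {lW lH β c : ℝ} (hlH : 0 ≤ lH)
    (hβ : β ≠ 0) (hβW : β ^ 2 * lW = n * lH) (hcβ : c * β = K * n * lH) (hc : 1 ≤ c)
    (W : Matrix (Fin K) (Fin d) ℝ) (H : Matrix (Fin d) (Fin K × Fin n) ℝ) :
    1 / 2 ≤ ufmObjective lW lH (oneHotLabels (Fin K) (Fin n)) W H := by
  set S := trace ((W * H)ᵀ * oneHotLabels (Fin K) (Fin n))
  have hKn : (0 : ℝ) < K * n := by positivity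
  have hreg : ∀ s : ℝ, s ≠ 0 → s ^ 2 * lW = n * lH →
      lH / s * S ≤ lW / 2 * frobSq W + lH / 2 * frobSq H := fun s hs hsW => by
    rw [regularizer_eq_frobSq_add_trace hs (by simpa using hsW) W H, le_add_iff_nonneg_left]
    exact mul_nonneg (by positivity) (frobSq_nonneg _)
  have hlHβ : lH / β = c / (K * n) := by
    rw [div_eq_div_iff hβ hKn.ne']
    linear_combination -hcβ
  have hcS := hreg β hβ hβW
  have hcS_neg := hreg (-β) (neg_ne_zero.2 hβ) (by rwa [neg_sq])
  rw [hlHβ, div_mul_eq_mul_div, div_le_iff₀ hKn] at hcS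
  rw [div_neg, hlHβ, neg_mul, div_mul_eq_mul_div, ← neg_div, div_le_iff₀ hKn] at hcS_neg
  have hloss := frobSq_sub_smul (W * H) (oneHotLabels (Fin K) (Fin n)) 1
  rw [one_smul, frobSq_oneHotLabels] at hloss
  rw [ufmObjective, add_assoc, hloss]
  simp only [Fintype.card_fin]
  have hF := frobSq_nonneg (W * H)
  field_simp
  rcases le_total 0 S with hS | hS <;> nlinarith

theorem exists_ufmObjective_eq (hK : K ≠ 0) (hn : n ≠ 0) (hd : K ≤ d) {lW lH β c : ℝ}
    (hβ : 0 < β) (hβW : β ^ 2 * lW = n * lH) (hcβ : c * β = K * n * lH) (hc : c ≤ 1) :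
    ∃ (W : Matrix (Fin K) (Fin d) ℝ) (H : Matrix (Fin d) (Fin K × Fin n) ℝ),
      ufmObjective lW lH (oneHotLabels (Fin K) (Fin n)) W H = c - c ^ 2 / 2 := by
  set E := (1 : Matrix (Fin d) (Fin d) ℝ).submatrix (Fin.castLE hd) id
  set W := √(β * (1 - c)) • E
  refine ⟨W, β⁻¹ • (Wᵀ * oneHotLabels (Fin K) (Fin n)), ?_⟩
  have hWH : W * (β⁻¹ • (Wᵀ * oneHotLabels (Fin K) (Fin n)))
      = (1 - c) • oneHotLabels (Fin K) (Fin n) := by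
    have hWW : W * Wᵀ = (β * (1 - c)) • 1 := by
      rw [transpose_smul, Matrix.smul_mul, Matrix.mul_smul,
        submatrix_one_mul_transpose (Fin.castLE_injective hd), smul_smul,
        Real.mul_self_sqrt (mul_nonneg hβ.le (sub_nonneg.2 hc))]
    rw [Matrix.mul_smul, ← Matrix.mul_assoc, hWW, Matrix.smul_mul, Matrix.one_mul, smul_smul,
      inv_mul_cancel_left₀ hβ.ne']
  rw [ufmObjective_eq_add_frobSq hK hn hβ.ne' hβW hcβ, hWH, sub_self, sub_self]
  simp only [frobSq_zero]
  ring

theorem ufmObjective_minimizer_eq (hK : K ≠ 0) (hn : n ≠ 0) (hd : K ≤ d) {lW lH β c : ℝ}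
    (hlH : 0 < lH) (hβ : 0 < β) (hβW : β ^ 2 * lW = n * lH) (hcβ : c * β = K * n * lH)
    (hc : c ≤ 1) {W : Matrix (Fin K) (Fin d) ℝ} {H : Matrix (Fin d) (Fin K × Fin n) ℝ}
    (hmin : ∀ (W' : Matrix (Fin K) (Fin d) ℝ) H',
      ufmObjective lW lH (oneHotLabels (Fin K) (Fin n)) W H
        ≤ ufmObjective lW lH (oneHotLabels (Fin K) (Fin n)) W' H') :
    W * H = (1 - c) • oneHotLabels (Fin K) (Fin n)
      ∧ H = β⁻¹ • (Wᵀ * oneHotLabels (Fin K) (Fin n)) := by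
  obtain ⟨W₀, H₀, h₀⟩ := exists_ufmObjective_eq hK hn hd hβ hβW hcβ hc
  have hle := hmin W₀ H₀
  rw [h₀, ufmObjective_eq_add_frobSq hK hn hβ.ne' hβW hcβ] at hle
  set A := frobSq (W * H - (1 - c) • oneHotLabels (Fin K) (Fin n))
  set B := frobSq (H - β⁻¹ • (Wᵀ * oneHotLabels (Fin K) (Fin n)))
  have hA : 0 ≤ A := frobSq_nonneg _
  have hB : 0 ≤ B := frobSq_nonneg _
  have hKn : (0 : ℝ) < 1 / (2 * K * n) := by positivity
  refine ⟨sub_eq_zero.1 (frobSq_eq_zero_iff.1 ?_), sub_eq_zero.1 (frobSq_eq_zero_iff.1 ?_)⟩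
  · nlinarith
  · nlinarith

end Objective

/-- **Theorem 1** (bias-free UFM with regularized MSE loss).
If `c := K√(nλ_H λ_W) ≤ 1`, any global minimizer `(W*, H*)` of
`f(W,H) = (1/(2Kn))‖WH − Y‖_F² + (λ_W/2)‖W‖_F² + (λ_H/2)‖H‖_F²`
collapses: each class's feature columns are equal to a common `h*_k`, the `h*_k` form an
orthogonal frame with common squared norm `ρ = (1−c)√(λ_W/(nλ_H))`, and
`w*_k = √(nλ_H/λ_W) h*_k`.  If `c > 1`, `(0,0)` is a global minimizer. -/
theorem ufm_mse_biasFree_collapse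
    (K d n : ℕ) (hK : 2 ≤ K) (hd : K ≤ d) (hn : 1 ≤ n)
    (lW lH : ℝ) (hlW : 0 < lW) (hlH : 0 < lH)
    (c : ℝ) (hc : c = (K : ℝ) * Real.sqrt ((n : ℝ) * lH * lW))
    (Y : Matrix (Fin K) (Fin K × Fin n) ℝ)
    (hY : ∀ k p, Y k p = if p.1 = k then 1 else 0)
    (f : Matrix (Fin K) (Fin d) ℝ → Matrix (Fin d) (Fin K × Fin n) ℝ → ℝ)
    (hf : ∀ W H, f W H =
      1 / (2 * (K : ℝ) * (n : ℝ)) * frobSq (W * H - Y)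
        + lW / 2 * frobSq W + lH / 2 * frobSq H) :
    (c ≤ 1 →
      ∀ (Ws : Matrix (Fin K) (Fin d) ℝ) (Hs : Matrix (Fin d) (Fin K × Fin n) ℝ),
        (∀ W H, f Ws Hs ≤ f W H) →
        ∃ h : Fin K → Fin d → ℝ,
          -- (i) within-class collapse
          (∀ (k : Fin K) (i : Fin n) (j : Fin d), Hs j (k, i) = h k j) ∧
          -- (ii) equal squared norms, all equal ρ
          (∀ k : Fin K, ∑ j, (h k j) ^ 2
              = (1 - c) * Real.sqrt (lW / ((n : ℝ) * lH))) ∧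
          -- (iii) Gram matrix is ρ·I_K
          (∀ k k' : Fin K, ∑ j, h k j * h k' j
              = if k = k' then (1 - c) * Real.sqrt (lW / ((n : ℝ) * lH)) else 0) ∧
          -- (iv) weights aligned with features
          (∀ (k : Fin K) (j : Fin d), Ws k j = Real.sqrt ((n : ℝ) * lH / lW) * h k j)) ∧
    (1 < c → ∀ W H, f 0 0 ≤ f W H) := by
  obtain rfl : Y = oneHotLabels (Fin K) (Fin n) := Matrix.ext hY
  obtain rfl : f = ufmObjective lW lH (oneHotLabels (Fin K) (Fin n)) := funext₂ hf
  have hK0 : K ≠ 0 := by omega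
  have hn0 : n ≠ 0 := by omega
  set β := √(n * lH / lW)
  have hβ : 0 < β := Real.sqrt_pos.2 (by positivity)
  have hβW : β ^ 2 * lW = n * lH := by
    rw [Real.sq_sqrt (by positivity), div_mul_cancel₀ _ hlW.ne']
  have hcβ : c * β = K * n * lH := by
    rw [hc, mul_assoc, sqrt_mul_mul_sqrt_div (by positivity) hlW, mul_assoc]
  refine ⟨fun hc1 Ws Hs hmin => ?_, fun hc1 W H => ?_⟩
  · obtain ⟨hWH, hH⟩ := ufmObjective_minimizer_eq hK0 hn0 hd hlH hβ hβW hcβ hc1 hmin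
    have : Nonempty (Fin n) := ⟨⟨0, by omega⟩⟩
    have hgram := mul_transpose_eq_smul_one hβ.ne' hWH hH
    have hsqrt : √(lW / (n * lH)) = β⁻¹ := by rw [← inv_div, Real.sqrt_inv]
    have hh : ∀ k k', ∑ j, β⁻¹ * Ws k j * (β⁻¹ * Ws k' j)
        = if k = k' then (1 - c) * √(lW / (n * lH)) else 0 := fun k k' => by
      have := congrFun₂ hgram k k'
      simp only [mul_apply, transpose_apply, Matrix.smul_apply, one_apply, smul_eq_mul] at this
      simp only [mul_mul_mul_comm _ (Ws k _), ← mul_sum, this, hsqrt]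
      split_ifs
      · field_simp
      · simp
    refine ⟨fun k j => β⁻¹ * Ws k j, fun k i j => by simp [hH], fun k => ?_, hh,
      fun k j => by field_simp⟩
    simpa [sq] using hh k k
  · rw [ufmObjective_zero_zero hK0 hn0]
    exact one_half_le_ufmObjective hK0 hn0 hlH.le hβ.ne' hβW hcβ hc1.le W H
end
end

section
/- Let K ≥ 1, d ≥ 1, ρ ≥ 0, and let H̄ ∈ ℝ^{d×K} satisfy H̄ᵀH̄ = ρ·I_K (an orthogonal frame). Define the global mean h_G := (1/K)·H̄·1_K ∈ ℝ^d. Then (H̄ − h_G·1_Kᵀ)ᵀ(H̄ − h_G·1_Kᵀ) = ρ·(I_K − (1/K)·1_K·1_Kᵀ); that is, the centered orthogonal frame is a simplex equiangular tight frame. -/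
open Matrix Finset

noncomputable section

/-! Right multiplication by the centering projection `P = I - (1/K)·1 1ᵀ` subtracts from each
row its mean, so the centered frame is `C = H̄ P`. Since `P` is a symmetric idempotent,
`Cᵀ C = P (H̄ᵀ H̄) P = ρ P² = ρ P`. -/

namespace Matrix

theorem transpose_mul_self_of_symm_isIdempotentElem {m n R : Type*} [Fintype m] [Fintype n]
    [DecidableEq n] [CommRing R] {H : Matrix m n R} {P : Matrix n n R} {ρ : R}
    (hH : Hᵀ * H = ρ • 1) (hPt : Pᵀ = P) (hP : IsIdempotentElem P) :
    (H * P)ᵀ * (H * P) = ρ • P := by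
  rw [transpose_mul, hPt, Matrix.mul_assoc, ← Matrix.mul_assoc Hᵀ, hH, Matrix.smul_mul,
    Matrix.one_mul, Matrix.mul_smul, hP.eq]

variable {n R : Type*} [Fintype n]

theorem of_one_mul_of_one [NonAssocSemiring R] :
    (of fun _ _ : n => (1 : R)) * of (fun _ _ => 1) = (Fintype.card n : R) • of fun _ _ => 1 := by
  ext i j
  simp [mul_apply]

variable [Field R]

theorem isIdempotentElem_inv_card_smul_of_one (hn : (Fintype.card n : R) ≠ 0) :
    IsIdempotentElem ((1 / (Fintype.card n : R)) • of fun _ _ : n => (1 : R)) := by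
  rw [IsIdempotentElem, smul_mul_smul_comm, of_one_mul_of_one, smul_smul]
  congr 1
  field_simp

variable (n R) [DecidableEq n]

def centeringMatrix : Matrix n n R :=
  1 - (1 / (Fintype.card n : R)) • of fun _ _ => 1

variable {n R}

theorem transpose_centeringMatrix : (centeringMatrix n R)ᵀ = centeringMatrix n R := by
  ext i j
  simp [centeringMatrix, one_apply, eq_comm]

theorem isIdempotentElem_centeringMatrix (hn : (Fintype.card n : R) ≠ 0) :
    IsIdempotentElem (centeringMatrix n R) :=
  (isIdempotentElem_inv_card_smul_of_one hn).one_sub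

theorem mul_centeringMatrix_apply {m : Type*} (A : Matrix m n R) (i : m) (j : n) :
    (A * centeringMatrix n R) i j = A i j - 1 / (Fintype.card n : R) * ∑ k, A i k := by
  rw [centeringMatrix, Matrix.mul_sub, Matrix.mul_one, Matrix.mul_smul, sub_apply, smul_apply,
    smul_eq_mul]
  simp [mul_apply]

end Matrix

theorem centered_orthogonal_frame_is_simplex_ETF_general
    (K d : ℕ) (hK : 1 ≤ K)
    (ρ : ℝ)
    (Hbar : Matrix (Fin d) (Fin K) ℝ)
    (hOF : Hbarᵀ * Hbar = ρ • (1 : Matrix (Fin K) (Fin K) ℝ))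
    (hG : Fin d → ℝ) (hhG : ∀ j, hG j = (1 / (K : ℝ)) * ∑ k, Hbar j k)
    (C : Matrix (Fin d) (Fin K) ℝ) (hC : ∀ j k, C j k = Hbar j k - hG j) :
    Cᵀ * C = ρ • ((1 : Matrix (Fin K) (Fin K) ℝ)
        - (1 / (K : ℝ)) • Matrix.of (fun _ _ : Fin K => (1 : ℝ))) := by
  have hK0 : (Fintype.card (Fin K) : ℝ) ≠ 0 := by
    rw [Fintype.card_fin]
    exact_mod_cast Nat.one_le_iff_ne_zero.mp hK
  have hCP : C = Hbar * centeringMatrix (Fin K) ℝ := by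
    ext j k
    rw [hC, hhG, mul_centeringMatrix_apply, Fintype.card_fin]
  rw [hCP, transpose_mul_self_of_symm_isIdempotentElem hOF transpose_centeringMatrix
    (isIdempotentElem_centeringMatrix hK0), centeringMatrix, Fintype.card_fin]

/-- Centering an orthogonal frame by its global mean yields a simplex ETF:
if `H̄ᵀH̄ = ρ·I_K` and `h_G = (1/K)·H̄·1_K`, then
`(H̄ − h_G 1_Kᵀ)ᵀ(H̄ − h_G 1_Kᵀ) = ρ·(I_K − (1/K)·1_K 1_Kᵀ)`. -/
theorem centered_orthogonal_frame_is_simplex_ETF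
    (K d : ℕ) (hK : 1 ≤ K) (hd : 1 ≤ d)
    (ρ : ℝ) (hρ : 0 ≤ ρ)
    (Hbar : Matrix (Fin d) (Fin K) ℝ)
    (hOF : Hbarᵀ * Hbar = ρ • (1 : Matrix (Fin K) (Fin K) ℝ))
    (hG : Fin d → ℝ) (hhG : ∀ j, hG j = (1 / (K : ℝ)) * ∑ k, Hbar j k)
    (C : Matrix (Fin d) (Fin K) ℝ) (hC : ∀ j k, C j k = Hbar j k - hG j) :
    Cᵀ * C = ρ • ((1 : Matrix (Fin K) (Fin K) ℝ)
        - (1 / (K : ℝ)) • Matrix.of (fun _ _ : Fin K => (1 : ℝ))) :=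
  centered_orthogonal_frame_is_simplex_ETF_general K d hK ρ Hbar hOF hG hhG C hC
end
end

section
/- Let d ≥ K ≥ 2, n ≥ 1, λ_W > 0, λ_H > 0, and set c := K√(nλ_H λ_W). Consider g(W,H,b) := (1/(2Kn))‖WH + b·1_Nᵀ − Y‖_F² + (λ_W/2)‖W‖_F² + (λ_H/2)‖H‖_F² over W ∈ ℝ^{K×d}, H ∈ ℝ^{d×Kn}, b ∈ ℝ^K, with N = Kn. If c ≤ 1, then any global minimizer (W*, H*, b*) satisfies: (i) b* = (1/K)·1_K; (ii) h*_{k,1} = … = h*_{k,n} =: h*_k for every k ∈ [K]; (iii) the global feature mean h*_G := (1/K)·Σ_{k=1}^K h*_k equals 0; (iv) ‖h*_1‖₂² = … = ‖h*_K‖₂² = ρ := ((1−c)(K−1)/K)·√(λ_W/(nλ_H)); (v) [h*_1,…,h*_K]ᵀ[h*_1,…,h*_K] = ρ·(K/(K−1))·(I_K − (1/K)·1_K·1_Kᵀ); (vi) w*_k = √(nλ_H/λ_W)·h*_k for every k ∈ [K]. If c > 1, then g attains its global minimum at (W*, H*, b*) = (0, 0, (1/K)·1_K). -/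
/-!
Write `P = Y - (1/K) 1 1ᵀ` for the centred labels, `N = ‖P‖² = n (K - 1)`, `T = ⟨W H, P⟩` and
`s = √(n λ_H / λ_W)`, so that `c = K λ_W s`. The residual `R = W H + b 1ᵀ - Y` satisfies
`⟨R, P⟩ = T - N`, hence `‖R‖² ≥ (T - N)² / N` by Cauchy–Schwarz, with equality iff `R ∥ P`.
With `M = P Hᵀ = n · (class means - global mean)`, the regulariser splits as
`n (n ‖W‖² + s² ‖H‖²) = 2 n s T + ‖n W - s M‖² + s² (n ‖H - class means‖² + n² K ‖h_G‖²)`,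
a sum of squares. Together, `2 K n g ≥ (T - N)² / N + 2 c T`.

For `c ≤ 1` the right-hand side is at least `N c (2 - c)`, with equality only at `T = N (1 - c)`,
and a simplex ETF realises this value (this is where `d ≥ K` enters). So at a minimiser every
inequality is tight: the features collapse onto centred class means `h`, `W = s h`, and
`R = -c P`; reading `R = -c P` entrywise gives the bias and the Gram matrix of `h`.
For `c > 1` the same bound (when `T ≥ 0`) or the residual term alone (when `T ≤ 0`) gives
`2 K n g ≥ N`, the value at `(0, 0, 1/K)`.
-/

open Matrix Finset

noncomputable section

namespace UFM

section Frobenius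

variable {m n : Type*} [Fintype m] [Fintype n]

def frobInner (A B : Matrix m n ℝ) : ℝ := ∑ i, ∑ j, A i j * B i j

lemma frobSq_nonneg (A : Matrix m n ℝ) : 0 ≤ frobSq A := by
  unfold frobSq; positivity

lemma frobSq_eq_zero_iff {A : Matrix m n ℝ} : frobSq A = 0 ↔ A = 0 := by
  simp [frobSq, Fintype.sum_eq_zero_iff_of_nonneg, sq_nonneg, Pi.le_def, funext_iff,
    Finset.sum_nonneg, ← Matrix.ext_iff]

@[simp] lemma frobSq_zero : frobSq (0 : Matrix m n ℝ) = 0 := by simp [frobSq]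

lemma frobSq_smul (x : ℝ) (A : Matrix m n ℝ) : frobSq (x • A) = x ^ 2 * frobSq A := by
  simp only [frobSq, Matrix.smul_apply, smul_eq_mul, mul_sum, mul_pow]

lemma frobSq_smul_sub_smul (x y : ℝ) (A B : Matrix m n ℝ) :
    frobSq (x • A - y • B)
      = x ^ 2 * frobSq A - 2 * x * y * frobInner A B + y ^ 2 * frobSq B := by
  simp only [frobSq, frobInner, Matrix.sub_apply, Matrix.smul_apply, smul_eq_mul, mul_sum,
    ← sum_sub_distrib, ← sum_add_distrib]
  exact sum_congr rfl fun _ _ => sum_congr rfl fun _ _ => by ring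

lemma frobSq_eq_frobInner_sq_div_add {A B : Matrix m n ℝ} (hB : frobSq B ≠ 0) :
    frobSq A = frobInner A B ^ 2 / frobSq B
      + frobSq (frobSq B • A - frobInner A B • B) / frobSq B ^ 2 := by
  rw [frobSq_smul_sub_smul]; field_simp; ring

lemma frobInner_sq_div_le_frobSq (A B : Matrix m n ℝ) :
    frobInner A B ^ 2 / frobSq B ≤ frobSq A := by
  rcases eq_or_ne (frobSq B) 0 with hB | hB
  · simpa [hB] using frobSq_nonneg A
  · rw [frobSq_eq_frobInner_sq_div_add (A := A) hB, le_add_iff_nonneg_right]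
    have := frobSq_nonneg (frobSq B • A - frobInner A B • B)
    positivity

lemma smul_eq_smul_of_frobSq_eq {A B : Matrix m n ℝ} (hB : frobSq B ≠ 0)
    (h : frobSq A = frobInner A B ^ 2 / frobSq B) : frobSq B • A = frobInner A B • B := by
  rw [frobSq_eq_frobInner_sq_div_add hB, add_eq_left, div_eq_zero_iff, frobSq_eq_zero_iff,
    sub_eq_zero] at h
  exact h.resolve_right (by simpa using hB)

lemma frobInner_mul_left {l : Type*} [Fintype l] (W : Matrix m l ℝ) (H : Matrix l n ℝ)
    (B : Matrix m n ℝ) : frobInner (W * H) B = frobInner W (B * Hᵀ) := by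
  simp only [frobInner, mul_apply, transpose_apply, sum_mul, mul_sum]
  refine sum_congr rfl fun _ _ => ?_
  rw [sum_comm]
  exact sum_congr rfl fun _ _ => sum_congr rfl fun _ _ => by ring

lemma frobSq_eq_sum_mul_transpose_diag (A : Matrix m n ℝ) :
    frobSq A = ∑ i, (A * Aᵀ) i i := by
  simp [frobSq, mul_apply, sq]

end Frobenius

lemma sum_sq_eq_sum_sq_sub_mean_add {α : Type*} [Fintype α] (f : α → ℝ) :
    ∑ x, f x ^ 2 = ∑ x, (f x - (∑ y, f y) / Fintype.card α) ^ 2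
      + Fintype.card α * ((∑ y, f y) / Fintype.card α) ^ 2 := by
  rcases isEmpty_or_nonempty α with hα | hα
  · simp
  · have : (Fintype.card α : ℝ) ≠ 0 := Nat.cast_ne_zero.2 Fintype.card_ne_zero
    simp only [sub_sq, sum_add_distrib, sum_sub_distrib, ← sum_mul, ← mul_sum, sum_const,
      card_univ, nsmul_eq_mul]
    field_simp
    ring

section Labels

variable (ι κ : Type*) [Fintype ι] [DecidableEq ι]

def centering : Matrix ι ι ℝ :=
  of fun k k' => (if k = k' then 1 else 0) - (Fintype.card ι : ℝ)⁻¹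

def oneHot : Matrix ι (ι × κ) ℝ := of fun k p => if p.1 = k then 1 else 0

def centeredOneHot : Matrix ι (ι × κ) ℝ := of fun k p => centering ι k p.1

variable {ι κ}

lemma centering_comm (k k' : ι) : centering ι k k' = centering ι k' k := by
  simp [centering, eq_comm]

lemma centering_transpose : (centering ι)ᵀ = centering ι := by
  ext k k'; exact centering_comm k' k

lemma sum_centering_apply (k : ι) : ∑ k', centering ι k k' = 0 := by
  have : Nonempty ι := ⟨k⟩
  have : (Fintype.card ι : ℝ) ≠ 0 := Nat.cast_ne_zero.2 Fintype.card_ne_zero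
  simp [centering, sum_sub_distrib, this]

lemma centering_mul_self : centering ι * centering ι = centering ι := by
  ext k k'
  have hcol : ∑ x, centering ι x k' = 0 := by
    rw [← sum_centering_apply k']
    exact sum_congr rfl fun x _ => centering_comm x k'
  calc ∑ x, centering ι k x * centering ι x k'
      = ∑ x, ((if k = x then centering ι x k' else 0)
          - (Fintype.card ι : ℝ)⁻¹ * centering ι x k') :=
        sum_congr rfl fun x _ => by simp only [centering, of_apply]; split_ifs <;> ring
    _ = centering ι k k' := by simp [sum_sub_distrib, ← mul_sum, hcol]

lemma sum_centering_diag [Nonempty ι] : ∑ k, centering ι k k = Fintype.card ι - 1 := by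
  have : (Fintype.card ι : ℝ) ≠ 0 := Nat.cast_ne_zero.2 Fintype.card_ne_zero
  simp [centering, sum_sub_distrib, this]

lemma frobSq_centering [Nonempty ι] : frobSq (centering ι) = Fintype.card ι - 1 := by
  rw [frobSq_eq_sum_mul_transpose_diag, centering_transpose, centering_mul_self,
    sum_centering_diag]

lemma oneHot_eq_centeredOneHot_add :
    oneHot ι κ = centeredOneHot ι κ + of fun _ _ => (Fintype.card ι : ℝ)⁻¹ := by
  ext k p; simp [oneHot, centeredOneHot, centering, eq_comm]

lemma sum_centeredOneHot_apply [Fintype κ] (k : ι) : ∑ p, centeredOneHot ι κ k p = 0 := by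
  simp [centeredOneHot, Fintype.sum_prod_type, ← mul_sum, sum_centering_apply]

lemma frobSq_centeredOneHot [Nonempty ι] [Fintype κ] :
    frobSq (centeredOneHot ι κ) = Fintype.card κ * (Fintype.card ι - 1) := by
  rw [← frobSq_centering]
  simp [frobSq, centeredOneHot, Fintype.sum_prod_type, ← mul_sum]

lemma frobInner_rowConst_centeredOneHot [Fintype κ] (b : ι → ℝ) :
    frobInner (of fun k (_ : ι × κ) => b k) (centeredOneHot ι κ) = 0 := by
  simp [frobInner, ← mul_sum, sum_centeredOneHot_apply]

end Labels

section ClassMeans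

variable {ι κ m : Type*} [Fintype ι] [DecidableEq ι] [Fintype κ]

def classMean (H : Matrix m (ι × κ) ℝ) : Matrix ι m ℝ :=
  of fun k j => (∑ i, H j (k, i)) / Fintype.card κ

def globalMean (H : Matrix m (ι × κ) ℝ) (j : m) : ℝ :=
  (∑ k, classMean H k j) / Fintype.card ι

lemma centeredOneHot_mul_transpose [Nonempty κ] (H : Matrix m (ι × κ) ℝ) :
    centeredOneHot ι κ * Hᵀ
      = (Fintype.card κ : ℝ) • of fun k j => classMean H k j - globalMean H j := by
  have hn : (Fintype.card κ : ℝ) ≠ 0 := Nat.cast_ne_zero.2 Fintype.card_ne_zero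
  ext k j
  simp only [mul_apply, centeredOneHot, centering, transpose_apply, of_apply,
    Fintype.sum_prod_type, Matrix.smul_apply, smul_eq_mul, classMean, globalMean]
  simp [sub_mul, sum_sub_distrib, ← mul_sum, ← sum_div, mul_sub]
  field_simp

lemma card_mul_frobSq_eq [Fintype m] [Nonempty κ] (H : Matrix m (ι × κ) ℝ) :
    Fintype.card κ * frobSq H = frobSq (centeredOneHot ι κ * Hᵀ)
      + Fintype.card κ * frobSq (H - of fun j p => classMean H p.1 j)
      + Fintype.card κ ^ 2 * Fintype.card ι * ∑ j, globalMean H j ^ 2 := by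
  have hwithin (j : m) (k : ι) : ∑ i, H j (k, i) ^ 2
      = ∑ i, (H j (k, i) - classMean H k j) ^ 2 + Fintype.card κ * classMean H k j ^ 2 :=
    sum_sq_eq_sum_sq_sub_mean_add fun i => H j (k, i)
  have hbetween (j : m) : ∑ k, classMean H k j ^ 2
      = ∑ k, (classMean H k j - globalMean H j) ^ 2 + Fintype.card ι * globalMean H j ^ 2 :=
    sum_sq_eq_sum_sq_sub_mean_add fun k => classMean H k j
  have hM : frobSq (centeredOneHot ι κ * Hᵀ)
      = Fintype.card κ ^ 2 * ∑ j, ∑ k, (classMean H k j - globalMean H j) ^ 2 := by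
    rw [centeredOneHot_mul_transpose, frobSq_smul, frobSq, sum_comm]
    simp
  rw [hM, frobSq, frobSq]
  simp only [Matrix.sub_apply, of_apply, Fintype.sum_prod_type, hwithin, sum_add_distrib,
    ← mul_sum, hbetween, mul_add]
  ring

end ClassMeans

section Loss

variable {ι κ m : Type*} [Fintype ι] [DecidableEq ι] [Fintype κ] [Fintype m]

def residual (W : Matrix ι m ℝ) (H : Matrix m (ι × κ) ℝ) (b : ι → ℝ) : Matrix ι (ι × κ) ℝ :=
  W * H + of (fun k (_ : ι × κ) => b k) - oneHot ι κ

def loss (lW lH : ℝ) (W : Matrix ι m ℝ) (H : Matrix m (ι × κ) ℝ) (b : ι → ℝ) : ℝ :=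
  1 / (2 * Fintype.card ι * Fintype.card κ) * frobSq (residual W H b)
    + lW / 2 * frobSq W + lH / 2 * frobSq H

lemma two_mul_card_mul_loss [Nonempty ι] [Nonempty κ] {lW lH s : ℝ}
    (hlH : Fintype.card κ * lH = lW * s ^ 2) (W : Matrix ι m ℝ) (H : Matrix m (ι × κ) ℝ)
    (b : ι → ℝ) :
    2 * Fintype.card ι * Fintype.card κ * loss lW lH W H b
      = frobSq (residual W H b)
        + Fintype.card ι * lW * (Fintype.card κ * frobSq W + s ^ 2 * frobSq H) := by
  have hK : (Fintype.card ι : ℝ) ≠ 0 := Nat.cast_ne_zero.2 Fintype.card_ne_zero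
  have hn : (Fintype.card κ : ℝ) ≠ 0 := Nat.cast_ne_zero.2 Fintype.card_ne_zero
  unfold loss
  field_simp
  linear_combination (Fintype.card ι * frobSq H) * hlH

lemma frobInner_residual_centeredOneHot [Nonempty ι] (W : Matrix ι m ℝ)
    (H : Matrix m (ι × κ) ℝ) (b : ι → ℝ) :
    frobInner (residual W H b) (centeredOneHot ι κ)
      = frobInner (W * H) (centeredOneHot ι κ) - Fintype.card κ * (Fintype.card ι - 1) := by
  have hrow := frobInner_rowConst_centeredOneHot (κ := κ) fun k => b k - (Fintype.card ι : ℝ)⁻¹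
  rw [← frobSq_centeredOneHot, ← sub_eq_zero, ← hrow, residual, oneHot_eq_centeredOneHot_add]
  simp only [frobInner, frobSq, ← sum_sub_distrib, Matrix.add_apply, Matrix.sub_apply, of_apply]
  exact sum_congr rfl fun _ _ => sum_congr rfl fun _ _ => by ring

lemma sq_sub_div_le_frobSq_residual [Nonempty ι] (W : Matrix ι m ℝ) (H : Matrix m (ι × κ) ℝ)
    (b : ι → ℝ) :
    (frobInner (W * H) (centeredOneHot ι κ) - Fintype.card κ * (Fintype.card ι - 1)) ^ 2
        / (Fintype.card κ * (Fintype.card ι - 1))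
      ≤ frobSq (residual W H b) := by
  simpa only [frobInner_residual_centeredOneHot, frobSq_centeredOneHot] using
    frobInner_sq_div_le_frobSq (residual W H b) (centeredOneHot ι κ)

lemma smul_residual_eq_of_frobSq_eq [Nonempty κ] (hK : 1 < Fintype.card ι)
    {W : Matrix ι m ℝ} {H : Matrix m (ι × κ) ℝ} {b : ι → ℝ}
    (h : frobSq (residual W H b)
      = (frobInner (W * H) (centeredOneHot ι κ) - Fintype.card κ * (Fintype.card ι - 1)) ^ 2
        / (Fintype.card κ * (Fintype.card ι - 1))) :
    (Fintype.card κ * (Fintype.card ι - 1) : ℝ) • residual W H b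
      = (frobInner (W * H) (centeredOneHot ι κ) - Fintype.card κ * (Fintype.card ι - 1))
        • centeredOneHot ι κ := by
  have : Nonempty ι := Fintype.card_pos_iff.1 (by omega)
  have hP : frobSq (centeredOneHot ι κ) ≠ 0 := by
    have : (1 : ℝ) < Fintype.card ι := by exact_mod_cast hK
    have : (0 : ℝ) < Fintype.card κ := by exact_mod_cast Fintype.card_pos
    rw [frobSq_centeredOneHot]
    positivity
  rw [← frobInner_residual_centeredOneHot W H b, ← frobSq_centeredOneHot] at h ⊢
  exact smul_eq_smul_of_frobSq_eq hP h

lemma card_mul_frobSq_add_sq_mul_frobSq [Nonempty κ] (s : ℝ) (W : Matrix ι m ℝ)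
    (H : Matrix m (ι × κ) ℝ) :
    Fintype.card κ * (Fintype.card κ * frobSq W + s ^ 2 * frobSq H)
      = 2 * Fintype.card κ * s * frobInner (W * H) (centeredOneHot ι κ)
        + frobSq ((Fintype.card κ : ℝ) • W - s • (centeredOneHot ι κ * Hᵀ))
        + s ^ 2 * (Fintype.card κ * frobSq (H - of fun j p => classMean H p.1 j)
          + Fintype.card κ ^ 2 * Fintype.card ι * ∑ j, globalMean H j ^ 2) := by
  rw [frobSq_smul_sub_smul, frobInner_mul_left]
  linear_combination s ^ 2 * card_mul_frobSq_eq H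

lemma two_mul_frobInner_le [Nonempty κ] (s : ℝ) (W : Matrix ι m ℝ) (H : Matrix m (ι × κ) ℝ) :
    2 * s * frobInner (W * H) (centeredOneHot ι κ)
      ≤ Fintype.card κ * frobSq W + s ^ 2 * frobSq H := by
  have hn : (0 : ℝ) < Fintype.card κ := by exact_mod_cast Fintype.card_pos
  have := frobSq_nonneg ((Fintype.card κ : ℝ) • W - s • (centeredOneHot ι κ * Hᵀ))
  have := frobSq_nonneg (H - of fun j p => classMean H p.1 j)
  have : 0 ≤ s ^ 2 * (Fintype.card κ * frobSq (H - of fun j p => classMean H p.1 j)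
      + Fintype.card κ ^ 2 * Fintype.card ι * ∑ j, globalMean H j ^ 2) := by positivity
  refine le_of_mul_le_mul_left ?_ hn
  linarith [card_mul_frobSq_add_sq_mul_frobSq s W H]

lemma collapse_of_two_mul_frobInner_eq [Nonempty ι] [Nonempty κ] {s : ℝ} (hs : s ≠ 0)
    {W : Matrix ι m ℝ} {H : Matrix m (ι × κ) ℝ}
    (h : 2 * s * frobInner (W * H) (centeredOneHot ι κ)
      = Fintype.card κ * frobSq W + s ^ 2 * frobSq H) :
    H = (of fun j p => classMean H p.1 j) ∧ globalMean H = 0 ∧ W = s • classMean H := by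
  have hn : (0 : ℝ) < Fintype.card κ := by exact_mod_cast Fintype.card_pos
  have hK : (0 : ℝ) < Fintype.card ι := by exact_mod_cast Fintype.card_pos
  have hgap : frobSq ((Fintype.card κ : ℝ) • W - s • (centeredOneHot ι κ * Hᵀ))
      + s ^ 2 * (Fintype.card κ * frobSq (H - of fun j p => classMean H p.1 j)
        + Fintype.card κ ^ 2 * Fintype.card ι * ∑ j, globalMean H j ^ 2) = 0 := by
    linear_combination (card_mul_frobSq_add_sq_mul_frobSq s W H).symm - Fintype.card κ * h
  have := frobSq_nonneg (H - of fun j p => classMean H p.1 j)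
  rw [add_eq_zero_iff_of_nonneg (frobSq_nonneg _) (by positivity), mul_eq_zero,
    add_eq_zero_iff_of_nonneg (by positivity) (by positivity)] at hgap
  obtain ⟨hWM, hs0 | ⟨hwithin, hmean⟩⟩ := hgap
  · exact absurd (pow_eq_zero_iff two_ne_zero |>.1 hs0) hs
  have hG : globalMean H = 0 := by
    have := (Fintype.sum_eq_zero_iff_of_nonneg fun j => sq_nonneg (globalMean H j)).1
      ((mul_eq_zero.1 hmean).resolve_left (by positivity))
    funext j
    simpa using congrFun this j
  refine ⟨sub_eq_zero.1 (frobSq_eq_zero_iff.1 ((mul_eq_zero.1 hwithin).resolve_left hn.ne')),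
    hG, ?_⟩
  rw [frobSq_eq_zero_iff, sub_eq_zero, centeredOneHot_mul_transpose, hG, smul_smul,
    mul_comm, ← smul_smul] at hWM
  refine smul_right_injective _ hn.ne' (hWM.trans ?_)
  ext; simp

end Loss

section SimplexETF

variable {ι κ m : Type*} [Fintype ι] [DecidableEq ι] [Fintype κ] [Fintype m] [DecidableEq m]

def simplexETF (e : ι ↪ m) : Matrix ι m ℝ := centering ι * (1 : Matrix m m ℝ).submatrix e id

lemma simplexETF_mul_transpose (e : ι ↪ m) :
    simplexETF e * (simplexETF e)ᵀ = centering ι := by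
  have hE : (1 : Matrix m m ℝ).submatrix e id * ((1 : Matrix m m ℝ).submatrix e id)ᵀ = 1 := by
    rw [transpose_submatrix, transpose_one, ← submatrix_mul _ _ _ _ _ Function.bijective_id,
      Matrix.mul_one, submatrix_one _ e.injective]
  rw [simplexETF, transpose_mul, Matrix.mul_assoc, ← Matrix.mul_assoc _ _ (centering ι)ᵀ, hE,
    Matrix.one_mul, centering_transpose, centering_mul_self]

lemma exists_two_mul_card_mul_loss_eq [Nonempty ι] [Nonempty κ] (e : ι ↪ m)
    {lW lH s c : ℝ} (hs : 0 < s) (hlH : Fintype.card κ * lH = lW * s ^ 2)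
    (hc : c = Fintype.card ι * lW * s) (hc1 : c ≤ 1) :
    ∃ (W : Matrix ι m ℝ) (H : Matrix m (ι × κ) ℝ) (b : ι → ℝ),
      2 * Fintype.card ι * Fintype.card κ * loss lW lH W H b
        = Fintype.card κ * (Fintype.card ι - 1) * (c * (2 - c)) := by
  set t := √((1 - c) / s)
  have ht : s * t ^ 2 = 1 - c := by
    rw [Real.sq_sqrt (div_nonneg (by linarith) hs.le)]; field_simp
  set F := simplexETF e
  have hgram (k k' : ι) : ∑ j, F k j * F k' j = centering ι k k' := by
    simpa [mul_apply] using congrFun (congrFun (simplexETF_mul_transpose e) k) k'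
  have hF : frobSq F = Fintype.card ι - 1 := by
    rw [frobSq_eq_sum_mul_transpose_diag, simplexETF_mul_transpose, sum_centering_diag]
  set H : Matrix m (ι × κ) ℝ := of fun j p => t * F p.1 j
  refine ⟨(s * t) • F, H, fun _ => (Fintype.card ι : ℝ)⁻¹, ?_⟩
  have hR : residual ((s * t) • F) H (fun _ => (Fintype.card ι : ℝ)⁻¹)
      = (-c) • centeredOneHot ι κ := by
    ext k p
    have hWH : ((s * t) • F * H) k p = (1 - c) * centering ι k p.1 := by
      rw [← ht, ← hgram, mul_apply, mul_sum]
      exact sum_congr rfl fun _ _ => by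
        simp only [H, Matrix.smul_apply, of_apply, smul_eq_mul]; ring
    simp only [residual, oneHot_eq_centeredOneHot_add, Matrix.sub_apply, Matrix.add_apply, hWH,
      of_apply, Matrix.smul_apply, smul_eq_mul, centeredOneHot]
    ring
  have hH : frobSq H = Fintype.card κ * t ^ 2 * frobSq F := by
    simp only [H, frobSq, of_apply, Fintype.sum_prod_type, mul_pow, sum_const, card_univ,
      nsmul_eq_mul, ← mul_sum]
    rw [sum_comm]; ring
  rw [two_mul_card_mul_loss hlH, hR, hH, frobSq_smul, frobSq_smul, frobSq_centeredOneHot, hF]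
  linear_combination (2 * Fintype.card κ * (Fintype.card ι - 1) * c) * ht
    - (2 * Fintype.card κ * (Fintype.card ι - 1) * s * t ^ 2) * hc

end SimplexETF

section GlobalMinimizers

variable {ι κ m : Type*} [Fintype ι] [DecidableEq ι] [Fintype κ] [Fintype m]

lemma loss_zero_le [Nonempty κ] (hK : 1 < Fintype.card ι) {lW lH s : ℝ} (hlW : 0 ≤ lW)
    (hlH : Fintype.card κ * lH = lW * s ^ 2) (hc1 : 1 ≤ Fintype.card ι * lW * s)
    (W : Matrix ι m ℝ) (H : Matrix m (ι × κ) ℝ) (b : ι → ℝ) :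
    loss lW lH (0 : Matrix ι m ℝ) (0 : Matrix m (ι × κ) ℝ) (fun _ => 1 / (Fintype.card ι : ℝ))
      ≤ loss lW lH W H b := by
  have : Nonempty ι := Fintype.card_pos_iff.1 (by omega)
  have hKpos : (1 : ℝ) < Fintype.card ι := by exact_mod_cast hK
  have hn : (0 : ℝ) < Fintype.card κ := by exact_mod_cast Fintype.card_pos
  have hR0 : residual (0 : Matrix ι m ℝ) (0 : Matrix m (ι × κ) ℝ)
      (fun _ => 1 / (Fintype.card ι : ℝ)) = (-1 : ℝ) • centeredOneHot ι κ := by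
    rw [residual, oneHot_eq_centeredOneHot_add]; ext; simp
  have hres := sq_sub_div_le_frobSq_residual W H b
  have hreg := mul_le_mul_of_nonneg_left (two_mul_frobInner_le s W H)
    (by positivity : 0 ≤ (Fintype.card ι : ℝ) * lW)
  have hreg0 : 0 ≤ Fintype.card κ * frobSq W + s ^ 2 * frobSq H := by
    have := frobSq_nonneg W; have := frobSq_nonneg H; positivity
  refine le_of_mul_le_mul_left ?_ (by positivity : (0 : ℝ) < 2 * Fintype.card ι * Fintype.card κ)
  rw [two_mul_card_mul_loss hlH, two_mul_card_mul_loss hlH, hR0, frobSq_smul,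
    frobSq_centeredOneHot, frobSq_zero, frobSq_zero]
  set N : ℝ := Fintype.card κ * (Fintype.card ι - 1)
  set T := frobInner (W * H) (centeredOneHot ι κ)
  have hN : 0 < N := mul_pos hn (by linarith)
  rw [div_le_iff₀ hN] at hres
  suffices N * N ≤ N * (frobSq (residual W H b)
      + Fintype.card ι * lW * (Fintype.card κ * frobSq W + s ^ 2 * frobSq H)) by
    have := le_of_mul_le_mul_left this hN
    linarith
  rcases le_total 0 T with hT | hT
  · have : 2 * T ≤ Fintype.card ι * lW * (Fintype.card κ * frobSq W + s ^ 2 * frobSq H) := by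
      nlinarith
    nlinarith
  · have : 0 ≤ N * (Fintype.card ι * lW * (Fintype.card κ * frobSq W + s ^ 2 * frobSq H)) := by
      positivity
    nlinarith

theorem loss_minimizer_collapse [Nonempty κ] (hK : 1 < Fintype.card ι) (e : ι ↪ m)
    {lW lH s c : ℝ} (hlW : 0 < lW) (hs : 0 < s) (hlH : Fintype.card κ * lH = lW * s ^ 2)
    (hc : c = Fintype.card ι * lW * s) (hc1 : c ≤ 1) {Ws : Matrix ι m ℝ}
    {Hs : Matrix m (ι × κ) ℝ} {bs : ι → ℝ}
    (hmin : ∀ (W : Matrix ι m ℝ) (H : Matrix m (ι × κ) ℝ) (b : ι → ℝ),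
      loss lW lH Ws Hs bs ≤ loss lW lH W H b) :
    residual Ws Hs bs = (-c) • centeredOneHot ι κ ∧
      Hs = (of fun j p => classMean Hs p.1 j) ∧ globalMean Hs = 0 ∧ Ws = s • classMean Hs := by
  classical
  have : Nonempty ι := Fintype.card_pos_iff.1 (by omega)
  have hKpos : (1 : ℝ) < Fintype.card ι := by exact_mod_cast hK
  have hn : (0 : ℝ) < Fintype.card κ := by exact_mod_cast Fintype.card_pos
  obtain ⟨W₀, H₀, b₀, h₀⟩ := exists_two_mul_card_mul_loss_eq (κ := κ) e hs hlH hc hc1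
  have hle := mul_le_mul_of_nonneg_left (hmin W₀ H₀ b₀)
    (by positivity : (0 : ℝ) ≤ 2 * Fintype.card ι * Fintype.card κ)
  rw [h₀, two_mul_card_mul_loss hlH] at hle
  have hres := sq_sub_div_le_frobSq_residual Ws Hs bs
  have hreg := two_mul_frobInner_le s Ws Hs
  set N : ℝ := Fintype.card κ * (Fintype.card ι - 1)
  set T := frobInner (Ws * Hs) (centeredOneHot ι κ)
  have hN : 0 < N := mul_pos hn (by linarith)
  have hKlW : 0 < Fintype.card ι * lW := by positivity
  have hsq : (T - N * (1 - c)) ^ 2 / N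
      = (T - N) ^ 2 / N + Fintype.card ι * lW * (2 * s * T) - N * (c * (2 - c)) := by
    rw [hc]; field_simp; ring
  have hsq0 : 0 ≤ (T - N * (1 - c)) ^ 2 / N := by positivity
  have hregT := mul_le_mul_of_nonneg_left hreg hKlW.le
  have hR : frobSq (residual Ws Hs bs) = (T - N) ^ 2 / N := by linarith
  have hreg_eq : 2 * s * T = Fintype.card κ * frobSq Ws + s ^ 2 * frobSq Hs :=
    le_antisymm hreg (le_of_mul_le_mul_left (by linarith) hKlW)
  have hT : T = N * (1 - c) := by
    have : (T - N * (1 - c)) ^ 2 / N = 0 := by linarith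
    rw [div_eq_zero_iff, pow_eq_zero_iff two_ne_zero, sub_eq_zero] at this
    exact this.resolve_right hN.ne'
  obtain ⟨hcol, hG, hW⟩ := collapse_of_two_mul_frobInner_eq hs.ne' hreg_eq
  refine ⟨?_, hcol, hG, hW⟩
  have hNR : N • residual Ws Hs bs = (T - N) • centeredOneHot ι κ :=
    smul_residual_eq_of_frobSq_eq hK hR
  rw [hT, show N * (1 - c) - N = N * -c by ring] at hNR
  exact smul_right_injective _ hN.ne' (hNR.trans (mul_smul N (-c) _))

lemma bias_eq_and_gram_eq_of_residual_eq [Nonempty ι] [Nonempty κ] {W : Matrix ι m ℝ}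
    {H : Matrix m (ι × κ) ℝ} {b : ι → ℝ} {s c : ℝ} (hs : s ≠ 0)
    (hR : residual W H b = (-c) • centeredOneHot ι κ)
    (hH : H = of fun j p => classMean H p.1 j) (hG : globalMean H = 0)
    (hW : W = s • classMean H) :
    (∀ k, b k = 1 / Fintype.card ι) ∧
      ∀ k k', ∑ j, classMean H k j * classMean H k' j = (1 - c) / s * centering ι k k' := by
  obtain ⟨i₀⟩ := ‹Nonempty κ›
  have hK : (Fintype.card ι : ℝ) ≠ 0 := Nat.cast_ne_zero.2 Fintype.card_ne_zero
  set h := classMean H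
  have hsum (j : m) : ∑ k, h k j = 0 := by
    simpa [globalMean, hK] using congrFun hG j
  have hentry (k k' : ι) : s * ∑ j, h k j * h k' j + b k
      - (centering ι k k' + (Fintype.card ι : ℝ)⁻¹) = -c * centering ι k k' := by
    have := congrFun (congrFun hR k) (k', i₀)
    rw [residual, hW, hH, oneHot_eq_centeredOneHot_add] at this
    simpa [mul_apply, centeredOneHot, mul_sum, mul_assoc] using this
  have hb (k : ι) : b k = 1 / Fintype.card ι := by
    have := sum_congr rfl fun k' (_ : k' ∈ univ) => hentry k k'
    have hrow : ∑ k', ∑ j, h k j * h k' j = 0 := by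
      rw [sum_comm]; simp [← mul_sum, hsum]
    simp only [sum_sub_distrib, sum_add_distrib, ← mul_sum, sum_centering_apply, hrow,
      sum_const, card_univ, nsmul_eq_mul, mul_inv_cancel₀ hK] at this
    field_simp
    linarith
  refine ⟨hb, fun k k' => ?_⟩
  have := hentry k k'
  rw [hb k, one_div] at this
  field_simp
  linarith

end GlobalMinimizers

end UFM

open UFM

/-- **Theorem 2** (UFM with regularized MSE loss, unregularized bias).
If `c := K√(nλ_H λ_W) ≤ 1`, any global minimizer `(W*, H*, b*)` of
`g(W,H,b) = (1/(2Kn))‖WH + b1_Nᵀ − Y‖_F² + (λ_W/2)‖W‖_F² + (λ_H/2)‖H‖_F²`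
satisfies: `b* = (1/K)1_K`; within-class collapse; zero global mean; equal norms
`ρ = ((1−c)(K−1)/K)√(λ_W/(nλ_H))`; simplex-ETF Gram matrix; and alignment of weights
with features.  If `c > 1`, `(0,0,(1/K)1_K)` is a global minimizer. -/
theorem ufm_mse_unregBias_simplexETF_collapse
    (K d n : ℕ) (hK : 2 ≤ K) (hd : K ≤ d) (hn : 1 ≤ n)
    (lW lH : ℝ) (hlW : 0 < lW) (hlH : 0 < lH)
    (c : ℝ) (hc : c = (K : ℝ) * Real.sqrt ((n : ℝ) * lH * lW))
    (ρ : ℝ) (hρ : ρ = (1 - c) * ((K : ℝ) - 1) / (K : ℝ) * Real.sqrt (lW / ((n : ℝ) * lH)))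
    (Y : Matrix (Fin K) (Fin K × Fin n) ℝ)
    (hY : ∀ k p, Y k p = if p.1 = k then 1 else 0)
    (g : Matrix (Fin K) (Fin d) ℝ → Matrix (Fin d) (Fin K × Fin n) ℝ → (Fin K → ℝ) → ℝ)
    (hg : ∀ W H b, g W H b =
      1 / (2 * (K : ℝ) * (n : ℝ)) *
          frobSq (W * H + Matrix.of (fun k (_ : Fin K × Fin n) => b k) - Y)
        + lW / 2 * frobSq W + lH / 2 * frobSq H) :
    (c ≤ 1 →
      ∀ (Ws : Matrix (Fin K) (Fin d) ℝ) (Hs : Matrix (Fin d) (Fin K × Fin n) ℝ)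
        (bs : Fin K → ℝ),
        (∀ W H b, g Ws Hs bs ≤ g W H b) →
        -- (i) optimal bias
        (∀ k, bs k = 1 / (K : ℝ)) ∧
        ∃ h : Fin K → Fin d → ℝ,
          -- (ii) within-class collapse
          (∀ (k : Fin K) (i : Fin n) (j : Fin d), Hs j (k, i) = h k j) ∧
          -- (iii) zero global feature mean
          (∀ j : Fin d, (1 / (K : ℝ)) * ∑ k, h k j = 0) ∧
          -- (iv) equal squared norms, all equal ρ
          (∀ k : Fin K, ∑ j, (h k j) ^ 2 = ρ) ∧
          -- (v) simplex-ETF Gram matrix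
          (∀ k k' : Fin K, ∑ j, h k j * h k' j
              = ρ * ((K : ℝ) / ((K : ℝ) - 1)) *
                  ((if k = k' then 1 else 0) - 1 / (K : ℝ))) ∧
          -- (vi) weights aligned with features
          (∀ (k : Fin K) (j : Fin d), Ws k j = Real.sqrt ((n : ℝ) * lH / lW) * h k j)) ∧
    (1 < c → ∀ W H b, g 0 0 (fun _ => 1 / (K : ℝ)) ≤ g W H b) := by
  have : Nonempty (Fin K) := ⟨⟨0, by omega⟩⟩
  have : Nonempty (Fin n) := ⟨⟨0, hn⟩⟩
  have hK' : 1 < Fintype.card (Fin K) := by simp; omega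
  have hK2 : (2 : ℝ) ≤ K := by exact_mod_cast hK
  have hK1 : (K : ℝ) - 1 ≠ 0 := by linarith
  set s := √((n : ℝ) * lH / lW) with hs_def
  have hs : 0 < s := Real.sqrt_pos.2 (by positivity)
  have hlH' : (Fintype.card (Fin n) : ℝ) * lH = lW * s ^ 2 := by
    rw [Real.sq_sqrt (by positivity), Fintype.card_fin]; field_simp
  have hc' : c = Fintype.card (Fin K) * lW * s := by
    have hsq : (n : ℝ) * lH * lW = (lW * s) ^ 2 := by
      rw [mul_pow, Real.sq_sqrt (by positivity)]; field_simp
    rw [hc, hsq, Real.sqrt_sq (by positivity), Fintype.card_fin, mul_assoc]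
  have hρ' : ρ * (K / (K - 1)) = (1 - c) / s := by
    rw [hρ, ← inv_div (n * lH), Real.sqrt_inv, ← hs_def]; field_simp
  obtain rfl : g = UFM.loss lW lH := by
    have hY' : Y = oneHot (Fin K) (Fin n) := by ext k p; simp [hY, oneHot]
    funext W H b; rw [hg, UFM.loss, UFM.residual, hY']; simp
  refine ⟨fun hc1 Ws Hs bs hmin => ?_, fun hc1 W H b => ?_⟩
  · obtain ⟨hR, hcol, hG, hW⟩ :=
      loss_minimizer_collapse hK' (Fin.castLEEmb hd) hlW hs hlH' hc' hc1 hmin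
    obtain ⟨hb, hgram⟩ := bias_eq_and_gram_eq_of_residual_eq hs.ne' hR hcol hG hW
    have hgram' (k k' : Fin K) : ∑ j, classMean Hs k j * classMean Hs k' j
        = ρ * (K / (K - 1)) * ((if k = k' then 1 else 0) - 1 / K) := by
      rw [hgram, ← hρ']; simp [centering]
    refine ⟨by simpa using hb, classMean Hs, fun k i j => congrFun (congrFun hcol j) (k, i),
      fun j => by simpa [globalMean, div_eq_inv_mul] using congrFun hG j,
      fun k => by simp only [sq, hgram', if_pos]; field_simp, hgram', fun k j => by simp [hW]⟩
  · simpa using loss_zero_le hK' hlW.le hlH' (hc' ▸ hc1.le) W H b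
end
end

section
/- Let K ≥ 2 and c > 0. Define f̃(α, α̃, β) := (1/2)(β·cos α − (K−1)/K)² + ((K−1)/2)(β·cos α̃ + 1/K)² + c·β over the set {(α, α̃, β) : β ≥ 0, −1/(K−1) ≤ cos α̃ ≤ 1}. Then: (i) if c > 1, the infimum of f̃ over this set equals (K−1)/(2K) and is attained exactly when β = 0; (ii) if c ≤ 1, the infimum equals ((K−1)/K)·(c − (1/2)c²) and is attained at (α, α̃, β) = (0, arccos(−1/(K−1)), (1−c)(K−1)/K). -/
/-!
Write `x = β cos α` and `y = β cos α̃`; the constraints become `x ≤ β` and `0 ≤ (K - 1) y + β`.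
For every `s`, the objective equals `(K - 1)(1 - s²)/(2K) + (c - 1 + s) β` plus two squares and
`(1 - s)` times a nonnegative combination of the two constraints. Taking `s = 0` gives the
bound `(K - 1)/(2K) + (c - 1) β`, which for `c > 1` is sharp only at `β = 0`; taking `s = 1 - c`
gives the bound `(K - 1)/K · (c - c²/2)`, and every remainder term vanishes at the stated point.
-/

noncomputable def scalarObjective (K c x y β : ℝ) : ℝ :=
  1 / 2 * (x - (K - 1) / K) ^ 2 + (K - 1) / 2 * (y + 1 / K) ^ 2 + c * β

namespace scalarObjective

variable {K c x y β : ℝ}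

theorem eq_add_sos (hK : K ≠ 0) (s : ℝ) :
    scalarObjective K c x y β
      = (K - 1) / (2 * K) * (1 - s ^ 2) + (c - 1 + s) * β
        + (1 / 2 * (x - s * (K - 1) / K) ^ 2 + (K - 1) / 2 * (y + s / K) ^ 2
          + (1 - s) * ((K - 1) / K * (β - x) + ((K - 1) * y + β) / K)) := by
  unfold scalarObjective
  field_simp
  ring

theorem le_of_feasible (hK : 1 ≤ K) {s : ℝ} (hs : s ≤ 1) (hx : x ≤ β)
    (hy : 0 ≤ (K - 1) * y + β) :
    (K - 1) / (2 * K) * (1 - s ^ 2) + (c - 1 + s) * β ≤ scalarObjective K c x y β := by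
  have hK0 : 0 < K := by linarith
  have hK1 : 0 ≤ K - 1 := by linarith
  have hremainder : 0 ≤ 1 / 2 * (x - s * (K - 1) / K) ^ 2 + (K - 1) / 2 * (y + s / K) ^ 2
      + (1 - s) * ((K - 1) / K * (β - x) + ((K - 1) * y + β) / K) :=
    add_nonneg (add_nonneg (by positivity) (mul_nonneg (by positivity) (sq_nonneg _)))
      (mul_nonneg (sub_nonneg.2 hs)
        (add_nonneg (mul_nonneg (by positivity) (sub_nonneg.2 hx)) (div_nonneg hy hK0.le)))
  rw [eq_add_sos hK0.ne' s]
  linarith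

end scalarObjective

theorem mul_cos_le_self {β : ℝ} (hβ : 0 ≤ β) (α : ℝ) : β * Real.cos α ≤ β :=
  mul_le_of_le_one_right hβ (Real.cos_le_one α)

theorem sub_one_mul_mul_cos_add_nonneg {K β α : ℝ} (hK : 1 < K) (hβ : 0 ≤ β)
    (hcos : -(1 / (K - 1)) ≤ Real.cos α) : 0 ≤ (K - 1) * (β * Real.cos α) + β := by
  have hK1 : 0 < K - 1 := by linarith
  have := mul_le_mul_of_nonneg_left hcos hK1.le
  rw [mul_neg, mul_one_div_cancel hK1.ne'] at this
  nlinarith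

/-- **Lemma 2** (scalar reduction of the unregularized-bias UFM analysis).
Let `f̃(α,α̃,β) = (1/2)(β cos α − (K−1)/K)² + ((K−1)/2)(β cos α̃ + 1/K)² + cβ`
over `{β ≥ 0, −1/(K−1) ≤ cos α̃ ≤ 1}`, for `K ≥ 2` and `c > 0`.
(i) If `c > 1`, the infimum is `(K−1)/(2K)`, attained exactly when `β = 0`.
(ii) If `c ≤ 1`, the infimum is `((K−1)/K)(c − c²/2)`, attained at
`(α,α̃,β) = (0, arccos(−1/(K−1)), (1−c)(K−1)/K)`. -/
theorem scalar_reduction_unregBias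
    (K : ℕ) (hK : 2 ≤ K) (c : ℝ) (hc : 0 < c)
    (ft : ℝ → ℝ → ℝ → ℝ)
    (hft : ∀ α α' β, ft α α' β =
      1 / 2 * (β * Real.cos α - ((K : ℝ) - 1) / (K : ℝ)) ^ 2
        + ((K : ℝ) - 1) / 2 * (β * Real.cos α' + 1 / (K : ℝ)) ^ 2 + c * β) :
    (1 < c →
      ∀ α α' β, 0 ≤ β → -(1 / ((K : ℝ) - 1)) ≤ Real.cos α' → Real.cos α' ≤ 1 →
        ((K : ℝ) - 1) / (2 * (K : ℝ)) ≤ ft α α' β ∧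
        (ft α α' β = ((K : ℝ) - 1) / (2 * (K : ℝ)) ↔ β = 0)) ∧
    (c ≤ 1 →
      (∀ α α' β, 0 ≤ β → -(1 / ((K : ℝ) - 1)) ≤ Real.cos α' → Real.cos α' ≤ 1 →
        ((K : ℝ) - 1) / (K : ℝ) * (c - 1 / 2 * c ^ 2) ≤ ft α α' β) ∧
      ft 0 (Real.arccos (-(1 / ((K : ℝ) - 1)))) ((1 - c) * ((K : ℝ) - 1) / (K : ℝ))
        = ((K : ℝ) - 1) / (K : ℝ) * (c - 1 / 2 * c ^ 2)) := by
  have hK2 : (2 : ℝ) ≤ K := by exact_mod_cast hK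
  have hK1 : (1 : ℝ) < K := by linarith
  have lower : ∀ s ≤ 1, ∀ α α' β, 0 ≤ β → -(1 / ((K : ℝ) - 1)) ≤ Real.cos α' →
      ((K : ℝ) - 1) / (2 * K) * (1 - s ^ 2) + (c - 1 + s) * β ≤ ft α α' β :=
    fun s hs α α' β hβ hcos => (hft α α' β).symm ▸ scalarObjective.le_of_feasible hK1.le hs
      (mul_cos_le_self hβ α) (sub_one_mul_mul_cos_add_nonneg hK1 hβ hcos)
  refine ⟨fun hc1 α α' β hβ hcos _ => ?_, fun hc1 => ⟨fun α α' β hβ hcos _ => ?_, ?_⟩⟩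
  · have h := lower 0 zero_le_one α α' β hβ hcos
    refine ⟨by nlinarith, fun heq => by nlinarith, ?_⟩
    rintro rfl
    rw [hft]
    field_simp
    ring
  · convert lower (1 - c) (by linarith) α α' β hβ hcos using 1
    ring
  · have hKm1 : (0 : ℝ) < K - 1 := by linarith
    have hinv : 1 / ((K : ℝ) - 1) ≤ 1 := (div_le_one hKm1).2 (by linarith)
    have hinv0 : 0 ≤ 1 / ((K : ℝ) - 1) := by positivity
    rw [hft, Real.cos_zero, Real.cos_arccos (by linarith) (by linarith)]
    field_simp
    ring
end

section
/- Let d ≥ 1, K ≥ 1, n ≥ 1, λ_W > 0, λ_H > 0. Any global minimizer (W*, H*) of f(W,H) := (1/(2Kn))‖WH − Y‖_F² + (λ_W/2)‖W‖_F² + (λ_H/2)‖H‖_F² over W ∈ ℝ^{K×d}, H ∈ ℝ^{d×Kn} has zero within-class variability: for every class k ∈ [K] and every pair of indices i₁, i₂ ∈ [n], the columns satisfy h*_{k,i₁} = h*_{k,i₂}; equivalently, H* = H̄ ⊗ 1_nᵀ for some H̄ ∈ ℝ^{d×K}. (This follows because, by strict convexity of the squared norm and Jensen's inequality, f(W,H)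 ≥ f(W, H̄ ⊗ 1_nᵀ) with H̄ the matrix of class means, with equality iff all within-class columns coincide.) -/
/-!
Replacing the features `H` of a minimizer by `H̄ ⊗ 1ᵀ`, `H̄` the matrix of class means, is right
multiplication by the orthogonal projection `P` onto class-constant columns. Since `Y P = Y`, the
residual becomes `(W H - Y) P` and the fit term does not grow, while
`‖H‖_F² = ‖H P‖_F² + ‖H - H P‖_F²` (Pythagoras for `P`) strictly drops unless `H P = H`.
-/

open Matrix Finset

noncomputable section

theorem sum_sq_eq_sum_sq_mean_add_sum_sq_sub_mean {ι : Type*} [Fintype ι] (x : ι → ℝ) :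
    ∑ i, x i ^ 2 = ∑ _i : ι, ((∑ i, x i) / Fintype.card ι) ^ 2
      + ∑ i, (x i - (∑ i, x i) / Fintype.card ι) ^ 2 := by
  rcases isEmpty_or_nonempty ι with hι | hι
  · simp
  set μ := (∑ i, x i) / Fintype.card ι with hμ
  have hsum : ∑ i, x i = Fintype.card ι * μ := by
    rw [hμ, mul_div_cancel₀]
    exact_mod_cast Fintype.card_ne_zero
  simp only [sub_sq, sum_add_distrib, sum_sub_distrib, ← sum_mul, ← mul_sum, hsum,
    sum_const, card_univ, nsmul_eq_mul]
  ring

section ClassAverage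

variable {m κ ι : Type*} [Fintype κ] [Fintype ι] [DecidableEq κ]

/-- `H * classAverage κ ι` is `H̄ ⊗ 1ᵀ`, where `H̄` is the matrix of class means of the columns
of `H`. -/
def classAverage (κ ι : Type*) [Fintype ι] [DecidableEq κ] : Matrix (κ × ι) (κ × ι) ℝ :=
  fun p q => if p.1 = q.1 then (Fintype.card ι : ℝ)⁻¹ else 0

theorem mul_classAverage_apply (H : Matrix m (κ × ι) ℝ) (j : m) (k : κ) (i : ι) :
    (H * classAverage κ ι) j (k, i) = (∑ i', H j (k, i')) / Fintype.card ι := by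
  rw [mul_apply, Fintype.sum_prod_type, Fintype.sum_eq_single k fun k' hk' =>
    sum_eq_zero fun _ _ => by simp [classAverage, hk']]
  simp [classAverage, sum_mul, div_eq_mul_inv]

theorem mul_classAverage_eq_self {H : Matrix m (κ × ι) ℝ}
    (hH : ∀ j k i i', H j (k, i) = H j (k, i')) : H * classAverage κ ι = H := by
  ext j ⟨k, i⟩
  have : (Fintype.card ι : ℝ) ≠ 0 := by
    have : Nonempty ι := ⟨i⟩
    exact_mod_cast Fintype.card_ne_zero
  rw [mul_classAverage_apply, Fintype.sum_congr _ _ (fun i' => hH j k i' i), sum_const,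
    card_univ, nsmul_eq_mul, mul_div_cancel_left₀ _ this]

variable [Fintype m]

theorem frobSq_eq_frobSq_mul_classAverage_add (H : Matrix m (κ × ι) ℝ) :
    frobSq H = frobSq (H * classAverage κ ι) + frobSq (H - H * classAverage κ ι) := by
  simp only [frobSq, Fintype.sum_prod_type, Matrix.sub_apply, mul_classAverage_apply,
    ← sum_add_distrib]
  exact sum_congr rfl fun j _ => sum_congr rfl fun k _ =>
    (sum_sq_eq_sum_sq_mean_add_sum_sq_sub_mean fun i => H j (k, i)).trans sum_add_distrib.symm

theorem frobSq_mul_classAverage_le (H : Matrix m (κ × ι) ℝ) :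
    frobSq (H * classAverage κ ι) ≤ frobSq H := by
  rw [frobSq_eq_frobSq_mul_classAverage_add H, le_add_iff_nonneg_right]
  exact sum_nonneg fun _ _ => sum_nonneg fun _ _ => sq_nonneg _

theorem frobSq_pos_of_ne_zero {n : Type*} [Fintype n] {A : Matrix m n ℝ} (hA : A ≠ 0) :
    0 < frobSq A := by
  obtain ⟨j, p, hjp⟩ : ∃ j p, A j p ≠ 0 := by
    by_contra! h
    exact hA (Matrix.ext h)
  exact sum_pos' (fun _ _ => sum_nonneg fun _ _ => sq_nonneg _)
    ⟨j, mem_univ _, sum_pos' (fun _ _ => sq_nonneg _) ⟨p, mem_univ _, by positivity⟩⟩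

theorem frobSq_mul_classAverage_lt {H : Matrix m (κ × ι) ℝ} (hH : H * classAverage κ ι ≠ H) :
    frobSq (H * classAverage κ ι) < frobSq H := by
  rw [frobSq_eq_frobSq_mul_classAverage_add H, lt_add_iff_pos_right]
  exact frobSq_pos_of_ne_zero (sub_ne_zero.mpr hH.symm)

end ClassAverage

theorem ufm_minimizer_zero_within_class_variability_general
    (d K n : ℕ)
    (lW lH : ℝ) (hlH : 0 < lH)
    (Y : Matrix (Fin K) (Fin K × Fin n) ℝ)
    (hY : ∀ k p, Y k p = if p.1 = k then 1 else 0)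
    (f : Matrix (Fin K) (Fin d) ℝ → Matrix (Fin d) (Fin K × Fin n) ℝ → ℝ)
    (hf : ∀ W H, f W H =
      1 / (2 * (K : ℝ) * (n : ℝ)) * frobSq (W * H - Y)
        + lW / 2 * frobSq W + lH / 2 * frobSq H)
    (Ws : Matrix (Fin K) (Fin d) ℝ) (Hs : Matrix (Fin d) (Fin K × Fin n) ℝ)
    (hmin : ∀ W H, f Ws Hs ≤ f W H) :
    (∀ (k : Fin K) (i₁ i₂ : Fin n) (j : Fin d), Hs j (k, i₁) = Hs j (k, i₂)) ∧
    (∃ Hbar : Matrix (Fin d) (Fin K) ℝ,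
      ∀ (j : Fin d) (k : Fin K) (i : Fin n), Hs j (k, i) = Hbar j k) := by
  have hYP : Y * classAverage (Fin K) (Fin n) = Y :=
    mul_classAverage_eq_self fun j k i i' => by simp [hY]
  have hfit : frobSq (Ws * (Hs * classAverage (Fin K) (Fin n)) - Y) ≤ frobSq (Ws * Hs - Y) := by
    rw [show Ws * (Hs * classAverage (Fin K) (Fin n)) - Y
        = (Ws * Hs - Y) * classAverage (Fin K) (Fin n) by
      rw [Matrix.sub_mul, Matrix.mul_assoc, hYP]]
    exact frobSq_mul_classAverage_le _
  have hHs : Hs * classAverage (Fin K) (Fin n) = Hs := by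
    by_contra hne
    have hreg := frobSq_mul_classAverage_lt hne
    have hle := hmin Ws (Hs * classAverage (Fin K) (Fin n))
    rw [hf, hf] at hle
    have hc : 0 ≤ 1 / (2 * (K : ℝ) * n) := by positivity
    linarith [mul_le_mul_of_nonneg_left hfit hc, mul_lt_mul_of_pos_left hreg (half_pos hlH)]
  have hmean : ∀ j k i, Hs j (k, i) = (∑ i', Hs j (k, i')) / n := fun j k i => by
    simpa [hHs] using mul_classAverage_apply Hs j k i
  exact ⟨fun k i₁ i₂ j => (hmean j k i₁).trans (hmean j k i₂).symm,
    fun j k => (∑ i', Hs j (k, i')) / n, hmean⟩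

/-- Any global minimizer of the bias-free regularized-MSE UFM objective has zero
within-class variability: all columns of each class coincide; equivalently
`H* = H̄ ⊗ 1_nᵀ` for some `H̄ ∈ ℝ^{d×K}`. -/
theorem ufm_minimizer_zero_within_class_variability
    (d K n : ℕ) (hd : 1 ≤ d) (hK : 1 ≤ K) (hn : 1 ≤ n)
    (lW lH : ℝ) (hlW : 0 < lW) (hlH : 0 < lH)
    (Y : Matrix (Fin K) (Fin K × Fin n) ℝ)
    (hY : ∀ k p, Y k p = if p.1 = k then 1 else 0)
    (f : Matrix (Fin K) (Fin d) ℝ → Matrix (Fin d) (Fin K × Fin n) ℝ → ℝ)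
    (hf : ∀ W H, f W H =
      1 / (2 * (K : ℝ) * (n : ℝ)) * frobSq (W * H - Y)
        + lW / 2 * frobSq W + lH / 2 * frobSq H)
    (Ws : Matrix (Fin K) (Fin d) ℝ) (Hs : Matrix (Fin d) (Fin K × Fin n) ℝ)
    (hmin : ∀ W H, f Ws Hs ≤ f W H) :
    (∀ (k : Fin K) (i₁ i₂ : Fin n) (j : Fin d), Hs j (k, i₁) = Hs j (k, i₂)) ∧
    (∃ Hbar : Matrix (Fin d) (Fin K) ℝ,
      ∀ (j : Fin d) (k : Fin K) (i : Fin n), Hs j (k, i) = Hbar j k) :=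
  ufm_minimizer_zero_within_class_variability_general d K n lW lH hlH Y hY f hf Ws Hs hmin

end
end
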